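/- Let n ≥ 1, let a = (a₁,...,aₙ) ∈ ℝⁿ be a nonzero vector, and let b ∈ ℝ. Suppose X̂ is a real symmetric positive semidefinite 2n×2n matrix satisfying: X̂_{ii} = 1 for all i ∈ {1,...,n}; X̂_{2n,2n} = b; a₁²X̂_{1,1} − 2a₁X̂_{1,n+1} + X̂_{n+1,n+1} = 0; and for every i with 2 ≤ i ≤ n, [a_i, 1, −1] X̂_{(i,n+i−1,n+i),(i,n+i−1,n+i)} [a_i; 1; −1] = 0. Then the matrix X := X̂_{1:n,1:n} satisfies X_{ii} = 1 for all i ∈ {1,...,n} and aᵀXa = b. -/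

import Mathlib

open Matrix

noncomputable section

/-- The quadratic form `[c, 1, −1] Y [c; 1; −1]` on the `3×3` principal submatrix of `X`
on rows/columns `r1, r2, r3`, written out entrywise. -/
def triQuad {m : Type*} (c : ℝ) (X : Matrix m m ℝ) (r1 r2 r3 : m) : ℝ :=
  c * c * X r1 r1 + c * X r1 r2 - c * X r1 r3
    + c * X r2 r1 + X r2 r2 - X r2 r3
    - c * X r3 r1 - X r3 r2 + X r3 r3

/-! A vector on which the quadratic form of a positive semidefinite matrix vanishes lies in its
kernel. The constraints say exactly this for `a₁e₁ − e_{n+1}` and for `aᵢeᵢ + e_{n+i−1} − e_{n+i}`,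
so inductively column `n+i` of `X̂` is `∑_{l ≤ i} a_l` times column `l`. For `i = n`, reading off
entry `2n` of column `2n` with the symmetry of `X̂` gives `b = X̂_{2n,2n} = aᵀXa`. -/

namespace Matrix.PosSemidef

variable {m : Type*} [Fintype m] [DecidableEq m] {M : Matrix m m ℝ}

theorem col_eq_smul_col (hM : M.PosSemidef) {c : ℝ} {i j : m}
    (h : c ^ 2 * M i i - 2 * c * M i j + M j j = 0) : M.col j = c • M.col i := by
  have hsymm : M j i = M i j := (isHermitian_iff_isSymm.mp hM.isHermitian).apply i j
  have hker : M *ᵥ (c • Pi.single i 1 - Pi.single j 1) = 0 :=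
    (hM.dotProduct_mulVec_zero_iff _).mp <| by
      simp only [star_trivial, mulVec_sub, mulVec_smul, mulVec_single_one, dotProduct_sub,
        dotProduct_smul, sub_dotProduct, smul_dotProduct, single_dotProduct, col_apply, one_mul,
        smul_eq_mul]
      linear_combination h - c * hsymm
  rw [mulVec_sub, mulVec_smul, mulVec_single_one, mulVec_single_one, sub_eq_zero] at hker
  exact hker.symm

theorem col_eq_smul_col_add_col (hM : M.PosSemidef) {c : ℝ} {i j k : m}
    (h : triQuad c M i j k = 0) : M.col k = c • M.col i + M.col j := by
  have hker : M *ᵥ (c • Pi.single i 1 + Pi.single j 1 - Pi.single k 1) = 0 :=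
    (hM.dotProduct_mulVec_zero_iff _).mp <| by
      unfold triQuad at h
      simp only [star_trivial, mulVec_sub, mulVec_add, mulVec_smul, mulVec_single_one,
        dotProduct_sub, dotProduct_add, dotProduct_smul, sub_dotProduct, add_dotProduct,
        smul_dotProduct, single_dotProduct, col_apply, one_mul, smul_eq_mul]
      linear_combination h
  rw [mulVec_sub, mulVec_add, mulVec_smul, mulVec_single_one, mulVec_single_one,
    mulVec_single_one, sub_eq_zero] at hker
  exact hker.symm

end Matrix.PosSemidef

theorem Fin.last_eq_sum_of_succ_eq_add {V : Type*} [AddCommMonoid V] :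
    ∀ {n : ℕ} (u v : Fin (n + 1) → V), v 0 = u 0 →
      (∀ k : Fin n, v k.succ = u k.succ + v k.castSucc) → v (Fin.last n) = ∑ i, u i
  | 0, u, v, h0, _ => by simpa using h0
  | n + 1, u, v, h0, hs => by
    rw [Fin.sum_univ_castSucc, ← Fin.succ_last, hs, add_comm]
    congr 1
    exact Fin.last_eq_sum_of_succ_eq_add (u ∘ castSucc) (v ∘ castSucc) h0
      fun k => by simpa using hs k.castSucc

theorem Matrix.IsSymm.apply_eq_sum_sum_of_col_eq_sum {ι m R : Type*} [Fintype ι] [CommSemiring R]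
    {M : Matrix m m R} (hM : M.IsSymm) (e : ι → m) (a : ι → R) {t : m}
    (h : M.col t = ∑ i, a i • M.col (e i)) :
    M t t = ∑ i, ∑ j, a i * M (e i) (e j) * a j := by
  have hcol : ∀ r, M r t = ∑ i, a i * M r (e i) := fun r => by
    simpa using congrFun h r
  calc M t t = ∑ i, a i * M t (e i) := hcol t
    _ = ∑ i, a i * M (e i) t := by simp_rw [hM.apply t]
    _ = ∑ i, ∑ j, a i * M (e i) (e j) * a j := by
      simp_rw [hcol, Finset.mul_sum]
      exact Finset.sum_congr rfl fun i _ => Finset.sum_congr rfl fun j _ => by ring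

/-- If `X̂` is a symmetric PSD `2n×2n` matrix satisfying the sparse extension constraints of
the simple example, then its top-left `n×n` block has unit diagonal and satisfies
`aᵀXa = b`. -/
theorem sparse_extension_to_original (n : ℕ) (hn : 1 ≤ n)
    (a : Fin n → ℝ) (b : ℝ)
    (Xh : Matrix (Fin (2*n)) (Fin (2*n)) ℝ) (hpsd : Xh.PosSemidef)
    (hdiag : ∀ i : Fin n, Xh ⟨(i : ℕ), by omega⟩ ⟨(i : ℕ), by omega⟩ = 1)
    (hlast : Xh ⟨2*n - 1, by omega⟩ ⟨2*n - 1, by omega⟩ = b)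
    (hfirst : a ⟨0, by omega⟩ ^ 2 * Xh ⟨0, by omega⟩ ⟨0, by omega⟩
        - 2 * a ⟨0, by omega⟩ * Xh ⟨0, by omega⟩ ⟨n, by omega⟩
        + Xh ⟨n, by omega⟩ ⟨n, by omega⟩ = 0)
    (hrec : ∀ i : Fin n, 1 ≤ (i : ℕ) →
      triQuad (a i) Xh ⟨(i : ℕ), by omega⟩ ⟨n + (i : ℕ) - 1, by omega⟩
        ⟨n + (i : ℕ), by omega⟩ = 0) :
    (∀ i : Fin n, Xh ⟨(i : ℕ), by omega⟩ ⟨(i : ℕ), by omega⟩ = 1) ∧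
    (∑ i : Fin n, ∑ j : Fin n,
      a i * Xh ⟨(i : ℕ), by omega⟩ ⟨(j : ℕ), by omega⟩ * a j) = b := by
  obtain ⟨m, rfl⟩ : ∃ m, n = m + 1 := ⟨n - 1, by omega⟩
  refine ⟨hdiag, ?_⟩
  have hcol : Xh.col ⟨2 * (m + 1) - 1, by omega⟩
      = ∑ i : Fin (m + 1), a i • Xh.col ⟨i, by omega⟩ := by
    have hsum := Fin.last_eq_sum_of_succ_eq_add (fun i => a i • Xh.col ⟨i, by omega⟩)
      (fun k => Xh.col ⟨m + 1 + k, by omega⟩) ?_ fun k => ?_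
    · convert hsum using 3
      simp only [Fin.val_last]
      omega
    · convert hpsd.col_eq_smul_col hfirst using 3 <;> simp
    · convert hpsd.col_eq_smul_col_add_col (hrec k.succ (by simp)) using 3
      simp only [Fin.mk.injEq, Fin.val_succ, Fin.val_castSucc]
      omega
  have hsymm : Xh.IsSymm := isHermitian_iff_isSymm.mp hpsd.isHermitian
  rw [← hlast]
  exact (hsymm.apply_eq_sum_sum_of_col_eq_sum _ a hcol).symm
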